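/- Assume a well-defined ADT in which every sort contains at least two constructor terms, and let C = σ¹ → f¹ → σ² → ⋯ → fⁿ → σ¹ be a cycle in the dependency graph D from a sort σ¹ to itself. If some constructor fⁱ on C has more than one argument, then there exist two incomparable constructor terms t₁[•], t₂[•] of sort σ¹ with holes of sort σ¹, and hence σ¹ is expanding. -/

import Mathlib

structure ADTSig where
  numSorts : ℕ
  numCtors : ℕ
  ctorArgs : Fin numCtors → List (Fin numSorts)
  ctorRes : Fin numCtors → Fin numSorts

namespace ADTSig

inductive Term (S : ADTSig) : Fin S.numSorts → Type where
  | mk (f : Fin S.numCtors)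
      (args : (i : Fin (S.ctorArgs f).length) → Term S ((S.ctorArgs f).get i)) :
      Term S (S.ctorRes f)

def Term.size {S : ADTSig} : {σ : Fin S.numSorts} → Term S σ → ℕ
  | _, .mk _ args => 1 + ∑ i, (args i).size

def Term.head {S : ADTSig} : {σ : Fin S.numSorts} → Term S σ → Fin S.numCtors
  | _, .mk f _ => f

def WellDefined (S : ADTSig) : Prop := ∀ σ, Nonempty (S.Term σ)

def ExpandingSort (S : ADTSig) (σ : Fin S.numSorts) : Prop :=
  ∀ n : ℕ, ∃ b : ℕ, ∀ b' ≥ b,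
    (∀ t : S.Term σ, t.size ≠ b') ∨ n ≤ Nat.card {t : S.Term σ // t.size = b'}

def ExpandingADT (S : ADTSig) : Prop := ∀ σ, ExpandingSort S σ

/-- The size image `𝕊_σ`. -/
def SizeImage (S : ADTSig) (σ : Fin S.numSorts) : Set ℕ :=
  {b | ∃ t : S.Term σ, t.size = b}

/-- The relativised size image `𝕊^f_σ`: sizes of terms not starting with `f`. -/
def RelSizeImage (S : ADTSig) (σ : Fin S.numSorts) (f : Fin S.numCtors) : Set ℕ :=
  {b | ∃ t : S.Term σ, t.head ≠ f ∧ t.size = b}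

/-- Vertices of the bipartite dependency graph: sorts and constructors. -/
abbrev DepVertex (S : ADTSig) := Sum (Fin S.numSorts) (Fin S.numCtors)

/-- Edges of the dependency graph `D`: `(σ₀, f)` for every constructor `f`
with result sort `σ₀`, and `(f, σ_j)` for every argument sort `σ_j` of `f`. -/
def DepEdge (S : ADTSig) : DepVertex S → DepVertex S → Prop
  | .inl σ, .inr f => S.ctorRes f = σ
  | .inr f, .inl σ => σ ∈ S.ctorArgs f
  | .inl _, .inl _ => False
  | .inr _, .inr _ => False

/-- `l` is a (nonempty) path in `D` from `σ` to itself: a closed walk. -/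
def IsClosedWalk (S : ADTSig) (σ : Fin S.numSorts) (l : List (DepVertex S)) : Prop :=
  l ≠ [] ∧ List.Chain (DepEdge S) (Sum.inl σ) l ∧ l.getLast? = some (Sum.inl σ)

/-- The vertex list (after the starting vertex `σ¹ = ss 0`) of the cycle
`σ¹ → f¹ → σ² → f² → ⋯ → fⁿ → σ¹` given by `ss`, `fs`. -/
def cycleList (S : ADTSig) (n : ℕ) (ss : Fin (n + 1) → Fin S.numSorts)
    (fs : Fin (n + 1) → Fin S.numCtors) : List (DepVertex S) :=
  ((List.finRange (n + 1)).map (fun i => [Sum.inr (fs i), Sum.inl (ss (i + 1))])).flatten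

/-- Constructor terms with exactly one hole `•` of sort `τ`; `Ctx S τ σ` is a
term of sort `σ` with a hole of sort `τ`. -/
inductive Ctx (S : ADTSig) (τ : Fin S.numSorts) : Fin S.numSorts → Type where
  | hole : Ctx S τ τ
  | node (f : Fin S.numCtors) (i : Fin (S.ctorArgs f).length)
      (c : Ctx S τ ((S.ctorArgs f).get i))
      (side : (j : Fin (S.ctorArgs f).length) → j ≠ i →
         S.Term ((S.ctorArgs f).get j)) :
      Ctx S τ (S.ctorRes f)

/-- `c.fill t` = `c[t]`, filling the hole of `c` with the term `t`. -/
def Ctx.fill {S : ADTSig} {τ : Fin S.numSorts} :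
    {σ : Fin S.numSorts} → Ctx S τ σ → S.Term τ → S.Term σ
  | _, .hole, t => t
  | _, .node f i c side, t =>
      Term.mk f (fun j =>
        if h : j = i then cast (by rw [h]) (c.fill t) else side j h)

/-- The size `|t[•]|` of a term with hole: the number of constructor
occurrences (the hole does not count). -/
def Ctx.csize {S : ADTSig} {τ : Fin S.numSorts} :
    {σ : Fin S.numSorts} → Ctx S τ σ → ℕ
  | _, .hole => 0
  | _, .node f i c side =>
      1 + c.csize + ∑ j, if h : j = i then 0 else (side j h).size

/-- Composition of terms with holes: `t₁[•] ∘ t₂[•] = t₁[t₂[•]]`. -/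
def Ctx.comp {S : ADTSig} {τ ρ : Fin S.numSorts} :
    {σ : Fin S.numSorts} → Ctx S τ σ → Ctx S ρ τ → Ctx S ρ σ
  | _, .hole, d => d
  | _, .node f i c side, d => .node f i (c.comp d) side

/-- `c^i`: the `i`-fold composition of a term with hole with itself. -/
def Ctx.pow {S : ADTSig} {σ : Fin S.numSorts} (c : Ctx S σ σ) : ℕ → Ctx S σ σ
  | 0 => .hole
  | i + 1 => c.comp (c.pow i)

/-- Two terms with holes are incomparable if all their fillings differ. -/
def Incomparable {S : ADTSig} {τ₁ τ₂ σ : Fin S.numSorts}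
    (c₁ : Ctx S τ₁ σ) (c₂ : Ctx S τ₂ σ) : Prop :=
  ∀ (s₁ : S.Term τ₁) (s₂ : S.Term τ₂), c₁.fill s₁ ≠ c₂.fill s₂

end ADTSig

/-!
The constructor of the cycle with a second argument yields two one-layer terms with hole that
differ in that other argument; extending both along the cycle back to `σ¹` keeps them
incomparable. If `t₁[•], t₂[•]` are incomparable, so are `t₁[t₂[•]]` and `t₂[t₁[•]]`, which
have the same size `K > 0`; hence the `2 ^ q` words of length `q` in them, filled with a term
`t`, are distinct terms of size `|t| + K q`. Every size of `σ¹` is congruent modulo `K` to one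
of finitely many sizes, so the number of terms of size `b` tends to infinity along the sizes.
-/

theorem Nat.eventually_le_of_le_add_mul {A : Set ℕ} {f : ℕ → ℕ} {K : ℕ} (hK : 0 < K)
    (h : ∀ a ∈ A, ∀ q, q ≤ f (a + K * q)) (N : ℕ) :
    ∀ᶠ b in Filter.atTop, b ∈ A → N ≤ f b := by
  have residue : ∀ r : Fin K, ∀ᶠ b in Filter.atTop, b % K = r → b ∈ A → N ≤ f b := by
    intro r
    by_cases hr : ∃ a ∈ A, a % K = r
    · obtain ⟨a, ha, har⟩ := hr
      filter_upwards [Filter.eventually_ge_atTop (a + K * N)] with b hb hmod _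
      obtain ⟨q, rfl⟩ : ∃ q, b = a + K * q := by
        obtain ⟨q, hq⟩ := (Nat.modEq_iff_dvd' (by omega)).mp (har.trans hmod.symm)
        exact ⟨q, by omega⟩
      calc N ≤ q := Nat.le_of_mul_le_mul_left (by omega) hK
        _ ≤ f (a + K * q) := h a ha q
    · exact Filter.Eventually.of_forall fun b hmod hb => (hr ⟨b, hb, hmod⟩).elim
  filter_upwards [Filter.eventually_all.2 residue] with b hb
  exact hb ⟨b % K, Nat.mod_lt _ hK⟩ rfl

theorem Fin.reflTransGen_of_forall_add_one {α : Type*} {R : α → α → Prop} {n : ℕ}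
    {x : Fin (n + 1) → α} (h : ∀ i, R (x i) (x (i + 1))) (i j : Fin (n + 1)) :
    Relation.ReflTransGen R (x i) (x j) := by
  have forward : ∀ k, Relation.ReflTransGen R (x i) (x (i + k)) := by
    refine Fin.induction (by simpa using .refl) fun k hk => hk.tail ?_
    simpa [← Fin.coeSucc_eq_succ, add_assoc] using h (i + k.castSucc)
  simpa using forward (j - i)

namespace ADTSig

variable {S : ADTSig}

theorem Term.finite_setOf_size_le (s : ℕ) (σ : Fin S.numSorts) :
    {t : S.Term σ | t.size ≤ s}.Finite := by
  induction s generalizing σ with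
  | zero =>
    convert Set.finite_empty
    ext ⟨f, args⟩
    simp [Term.size]
  | succ s ih =>
    have : ∀ τ, Finite {u : S.Term τ // u.size ≤ s} := fun τ => (ih τ).to_subtype
    let build : (Σ f, ∀ i : Fin (S.ctorArgs f).length,
        {u : S.Term ((S.ctorArgs f).get i) // u.size ≤ s}) → Σ τ, S.Term τ :=
      fun x => ⟨_, .mk x.1 fun i => (x.2 i).1⟩
    have hsub : Sigma.mk σ '' {t | t.size ≤ s + 1} ⊆ Set.range build := by
      rintro _ ⟨⟨f, args⟩, ht, rfl⟩
      refine ⟨⟨f, fun i => ⟨args i, ?_⟩⟩, rfl⟩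
      have := Finset.single_le_sum (fun j _ => Nat.zero_le ((args j).size)) (Finset.mem_univ i)
      simp only [Set.mem_ofPred_eq, Term.size] at ht
      omega
    exact ((Set.finite_range build).subset hsub).of_finite_image sigma_mk_injective.injOn

namespace Ctx

variable {τ ρ σ : Fin S.numSorts}

theorem fill_size (c : Ctx S τ σ) (t : S.Term τ) : (c.fill t).size = c.csize + t.size := by
  induction c with
  | hole => simp [fill, csize]
  | node f i c side ih =>
    have split : ∀ j, (if h : j = i then cast (by rw [h]) (c.fill t) else side j h).size
        = (if j = i then (c.fill t).size else 0) + (if h : j = i then 0 else (side j h).size) := by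
      intro j
      by_cases h : j = i
      · subst h; simp
      · simp [h]
    simp only [fill, csize, Term.size, split, Finset.sum_add_distrib, Finset.sum_ite_eq',
      Finset.mem_univ, if_true, ih]
    omega

theorem fill_injective (c : Ctx S τ σ) : Function.Injective c.fill := by
  induction c with
  | hole => exact fun _ _ h => h
  | node f i c side ih =>
    intro a b h
    simp only [fill, Term.mk.injEq] at h
    exact ih (by simpa using congrFun h i)

theorem comp_fill (c : Ctx S τ σ) (d : Ctx S ρ τ) (t : S.Term ρ) :
    (c.comp d).fill t = c.fill (d.fill t) := by
  induction c with
  | hole => rfl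
  | node f i c side ih => simp only [comp, fill, ih]

theorem csize_comp (c : Ctx S τ σ) (d : Ctx S ρ τ) : (c.comp d).csize = c.csize + d.csize := by
  induction c with
  | hole => simp [comp, csize]
  | node f i c side ih => simp only [comp, csize, ih]; omega

def word (c₁ c₂ : Ctx S σ σ) : List Bool → Ctx S σ σ
  | [] => .hole
  | true :: l => c₁.comp (word c₁ c₂ l)
  | false :: l => c₂.comp (word c₁ c₂ l)

theorem csize_word {c₁ c₂ : Ctx S σ σ} (hc : c₁.csize = c₂.csize) (l : List Bool) :
    (word c₁ c₂ l).csize = c₁.csize * l.length := by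
  induction l with
  | nil => simp [word, csize]
  | cons b l ih => cases b <;> simp only [word, csize_comp, ih, hc, List.length_cons] <;> ring

end Ctx

section Incomparable

variable {τ₁ τ₂ σ : Fin S.numSorts} {c₁ : Ctx S τ₁ σ} {c₂ : Ctx S τ₂ σ}

theorem Incomparable.csize_pos [Nonempty (S.Term τ₂)] (h : Incomparable c₁ c₂) :
    0 < c₁.csize := by
  cases c₁ with
  | hole => exact absurd rfl (h (c₂.fill (Classical.arbitrary _)) (Classical.arbitrary _))
  | node f i c side => simp only [Ctx.csize]; omega

theorem Incomparable.comp {ρ₁ ρ₂ : Fin S.numSorts} (h : Incomparable c₁ c₂)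
    (d₁ : Ctx S ρ₁ τ₁) (d₂ : Ctx S ρ₂ τ₂) : Incomparable (c₁.comp d₁) (c₂.comp d₂) := by
  intro s₁ s₂
  simpa only [Ctx.comp_fill] using h _ _

theorem Incomparable.comp_left {σ' : Fin S.numSorts} (h : Incomparable c₁ c₂) (c : Ctx S σ σ') :
    Incomparable (c.comp c₁) (c.comp c₂) := by
  intro s₁ s₂ e
  rw [Ctx.comp_fill, Ctx.comp_fill] at e
  exact h _ _ (c.fill_injective e)

theorem incomparable_node_of_ne {f : Fin S.numCtors} {k : Fin (S.ctorArgs f).length}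
    {c₁ : Ctx S τ₁ ((S.ctorArgs f).get k)} {c₂ : Ctx S τ₂ ((S.ctorArgs f).get k)}
    {side₁ side₂ : (j : Fin (S.ctorArgs f).length) → j ≠ k → S.Term ((S.ctorArgs f).get j)}
    {j : Fin (S.ctorArgs f).length} (hj : j ≠ k) (hne : side₁ j hj ≠ side₂ j hj) :
    Incomparable (.node f k c₁ side₁) (.node f k c₂ side₂) := by
  intro s₁ s₂ e
  simp only [Ctx.fill, Term.mk.injEq] at e
  exact hne (by simpa [hj] using congrFun e j)

end Incomparable

theorem Incomparable.word_fill_injective {σ : Fin S.numSorts} {c₁ c₂ : Ctx S σ σ}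
    (h : Incomparable c₁ c₂) (t : S.Term σ) {l₁ l₂ : List Bool} (hl : l₁.length = l₂.length)
    (e : (Ctx.word c₁ c₂ l₁).fill t = (Ctx.word c₁ c₂ l₂).fill t) : l₁ = l₂ := by
  induction l₁ generalizing l₂ with
  | nil => simpa using hl.symm
  | cons b₁ l₁ ih =>
    obtain _ | ⟨b₂, l₂⟩ := l₂
    · simp at hl
    have hl' : l₁.length = l₂.length := by simpa using hl
    cases b₁ <;> cases b₂ <;> simp only [Ctx.word, Ctx.comp_fill] at e
    · rw [ih hl' (c₂.fill_injective e)]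
    · exact absurd e.symm (h _ _)
    · exact absurd e (h _ _)
    · rw [ih hl' (c₁.fill_injective e)]

theorem Incomparable.two_pow_le_card {σ : Fin S.numSorts} {c₁ c₂ : Ctx S σ σ}
    (h : Incomparable c₁ c₂) (hc : c₁.csize = c₂.csize) (t : S.Term σ) (q : ℕ) :
    2 ^ q ≤ Nat.card {u : S.Term σ // u.size = t.size + c₁.csize * q} := by
  have : Finite {u : S.Term σ // u.size = t.size + c₁.csize * q} :=
    ((Term.finite_setOf_size_le _ σ).subset fun u hu => le_of_eq hu).to_subtype
  let F : (Fin q → Bool) → {u : S.Term σ // u.size = t.size + c₁.csize * q} := fun g =>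
    ⟨(Ctx.word c₁ c₂ (List.ofFn g)).fill t, by
      rw [Ctx.fill_size, Ctx.csize_word hc, List.length_ofFn]; ring⟩
  have hF : F.Injective := fun g₁ g₂ e =>
    List.ofFn_injective (h.word_fill_injective t (by simp) (congrArg Subtype.val e))
  simpa using Nat.card_le_card_of_injective F hF

theorem expandingSort_of_incomparable {σ : Fin S.numSorts} {c₁ c₂ : Ctx S σ σ}
    (h : Incomparable c₁ c₂) : ExpandingSort S σ := by
  rcases isEmpty_or_nonempty (S.Term σ) with hσ | hσ
  · exact fun _ => ⟨0, fun _ _ => Or.inl fun t => isEmptyElim t⟩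
  have hswap := h.comp c₂ c₁
  have hsize : (c₁.comp c₂).csize = (c₂.comp c₁).csize := by
    simp only [Ctx.csize_comp]; omega
  have hK : 0 < (c₁.comp c₂).csize := by
    have := h.csize_pos; rw [Ctx.csize_comp]; omega
  intro N
  obtain ⟨b, hb⟩ := Filter.eventually_atTop.1 <|
    Nat.eventually_le_of_le_add_mul (A := S.SizeImage σ)
      (f := fun b => Nat.card {u : S.Term σ // u.size = b}) hK
      (fun _ ⟨t, ht⟩ q => ht ▸ Nat.lt_two_pow_self.le.trans (hswap.two_pow_le_card hsize t q)) N
  exact ⟨b, fun b' hb' => or_iff_not_imp_left.2 fun hne => hb b' hb' (not_forall_not.1 hne)⟩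

/-- `σ → f → τ` is a two-step path of the dependency graph `D`. -/
def ArgSort (S : ADTSig) (σ τ : Fin S.numSorts) : Prop :=
  ∃ f, S.ctorRes f = σ ∧ τ ∈ S.ctorArgs f

theorem nonempty_ctx_of_reflTransGen_argSort (hS : S.WellDefined) {σ τ : Fin S.numSorts}
    (h : Relation.ReflTransGen S.ArgSort σ τ) : Nonempty (Ctx S τ σ) := by
  induction h with
  | refl => exact ⟨.hole⟩
  | tail _ hstep ih =>
    obtain ⟨c⟩ := ih
    obtain ⟨f, rfl, hmem⟩ := hstep
    obtain ⟨k, rfl⟩ := List.mem_iff_get.mp hmem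
    exact ⟨c.comp (.node f k .hole fun j _ => (hS _).some)⟩

theorem exists_incomparable_of_mem_ctorArgs (h2 : ∀ σ, ∃ t₁ t₂ : S.Term σ, t₁ ≠ t₂)
    {f : Fin S.numCtors} (hf : 1 < (S.ctorArgs f).length) {τ : Fin S.numSorts}
    (hτ : τ ∈ S.ctorArgs f) : ∃ c₁ c₂ : Ctx S τ (S.ctorRes f), Incomparable c₁ c₂ := by
  obtain ⟨k, rfl⟩ := List.mem_iff_get.mp hτ
  have : Nontrivial (Fin (S.ctorArgs f).length) := Fin.nontrivial_iff_two_le.2 hf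
  obtain ⟨j, hj⟩ := exists_ne k
  choose v w hvw using h2
  exact ⟨.node f k .hole fun _ _ => v _, .node f k .hole fun _ _ => w _,
    incomparable_node_of_ne hj (hvw _)⟩

end ADTSig

open ADTSig in
theorem nonunary_cycle_incomparable_expanding_general (S : ADTSig)
    (h2 : ∀ σ, ∃ t₁ t₂ : S.Term σ, t₁ ≠ t₂)
    (n : ℕ) (ss : Fin (n + 1) → Fin S.numSorts)
    (fs : Fin (n + 1) → Fin S.numCtors)
    (hcyc : ∀ i, S.ctorRes (fs i) = ss i ∧ ss (i + 1) ∈ S.ctorArgs (fs i))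
    (hbig : ∃ i, 1 < (S.ctorArgs (fs i)).length) :
    (∃ t₁ t₂ : Ctx S (ss 0) (ss 0), Incomparable t₁ t₂) ∧
    ExpandingSort S (ss 0) := by
  have hS : S.WellDefined := fun σ => (h2 σ).elim fun t _ => ⟨t⟩
  have reach : ∀ i j, Nonempty (Ctx S (ss j) (ss i)) := fun i j =>
    nonempty_ctx_of_reflTransGen_argSort hS <|
      Fin.reflTransGen_of_forall_add_one (fun i => ⟨fs i, hcyc i⟩) i j
  obtain ⟨i, hi⟩ := hbig
  have hmid := exists_incomparable_of_mem_ctorArgs h2 hi (hcyc i).2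
  rw [(hcyc i).1] at hmid
  obtain ⟨c₁, c₂, hc⟩ := hmid
  obtain ⟨pre⟩ := reach 0 i
  obtain ⟨post⟩ := reach (i + 1) 0
  have h := (hc.comp post post).comp_left pre
  exact ⟨⟨_, _, h⟩, expandingSort_of_incomparable h⟩

open ADTSig in
/-- Assume a well-defined ADT in which every sort contains at least two
constructor terms, and let `C = σ¹ → f¹ → σ² → ⋯ → fⁿ → σ¹` be a cycle in the
dependency graph `D` (here of length `n + 1`, with `σ¹ = ss 0`). If some
constructor on `C` has more than one argument, then there exist two
incomparable constructor terms `t₁[•], t₂[•]` of sort `σ¹` with holes of sort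
`σ¹`, and hence `σ¹` is expanding. -/
theorem nonunary_cycle_incomparable_expanding (S : ADTSig) (hS : S.WellDefined)
    (h2 : ∀ σ, ∃ t₁ t₂ : S.Term σ, t₁ ≠ t₂)
    (n : ℕ) (ss : Fin (n + 1) → Fin S.numSorts)
    (fs : Fin (n + 1) → Fin S.numCtors)
    (hcyc : ∀ i, S.ctorRes (fs i) = ss i ∧ ss (i + 1) ∈ S.ctorArgs (fs i))
    (hbig : ∃ i, 1 < (S.ctorArgs (fs i)).length) :
    (∃ t₁ t₂ : Ctx S (ss 0) (ss 0), Incomparable t₁ t₂) ∧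
    ExpandingSort S (ss 0) :=
  nonunary_cycle_incomparable_expanding_general S h2 n ss fs hcyc hbig
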